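/- Let m1 : Q → Q1, m2 : Q → Q2, m1' : Q1 → Q', m2' : Q2 → Q' be a pushout configuration in which all four quiver morphisms are embeddings. For any category C and any functors D1 : Paths Q1 ⥤ C and D2 : Paths Q2 ⥤ C whose pullbacks along m1 and m2 coincide (i.e., Paths m1 ⋙ D1 = Paths m2 ⋙ D2), there exists a unique functor D' : Paths Q' ⥤ C such that Paths m1' ⋙ D' = D1 and Paths m2' ⋙ D' = D2. -/

import Mathlib

open CategoryTheory

universe u u1 u2 u3 v v1 v2 v3 w w'

/-- The set of arrows (as triples source-target-arrow) in the image of a prefunctor. -/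
def arrowImage {V : Type*} {W : Type*} [Quiver V] [Quiver W] (m : V ⥤q W) :
    Set (Σ a b : W, a ⟶ b) :=
  Set.range fun p : Σ a b : V, a ⟶ b => ⟨m.obj p.1, m.obj p.2.1, m.map p.2.2⟩

/-- A quiver morphism is an embedding if it is injective on vertices and on arrows. -/
def IsQuiverEmbedding {V : Type*} {W : Type*} [Quiver V] [Quiver W] (m : V ⥤q W) : Prop :=
  Function.Injective m.obj ∧
    Function.Injective
      (fun p : Σ a b : V, a ⟶ b => (⟨m.obj p.1, m.obj p.2.1, m.map p.2.2⟩ : Σ a b : W, a ⟶ b))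

/-- A pushout configuration of quiver morphisms. -/
structure IsPushoutConfig {Q : Type*} {Q1 : Type*} {Q2 : Type*} {Q' : Type*}
    [Quiver Q] [Quiver Q1] [Quiver Q2] [Quiver Q']
    (m1 : Q ⥤q Q1) (m2 : Q ⥤q Q2) (m1' : Q1 ⥤q Q') (m2' : Q2 ⥤q Q') : Prop where
  comm : m1 ⋙q m1' = m2 ⋙q m2'
  vertexCover : Set.range m1'.obj ∪ Set.range m2'.obj = Set.univ
  arrowCover : arrowImage m1' ∪ arrowImage m2' = Set.univ
  vertexInter : Set.range (m1 ⋙q m1').obj = Set.range m1'.obj ∩ Set.range m2'.obj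
  arrowInter : arrowImage (m1 ⋙q m1') = arrowImage m1' ∩ arrowImage m2'

/-- The functor `Paths Q1 ⥤ Paths Q2` induced by a quiver morphism `m : Q1 ⥤q Q2`. -/
def pathsFunctor {V : Type*} {W : Type*} [Quiver V] [Quiver W] (m : V ⥤q W) :
    Paths V ⥤ Paths W :=
  Paths.lift (m ⋙q Paths.of W)

section Aux

variable {Q : Type u} {Q1 : Type u1} {Q2 : Type u2} {Q' : Type u3}
    [Quiver.{v + 1} Q] [Quiver.{v1 + 1} Q1] [Quiver.{v2 + 1} Q2] [Quiver.{v3 + 1} Q']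
    {m1 : Q ⥤q Q1} {m2 : Q ⥤q Q2} {m1' : Q1 ⥤q Q'} {m2' : Q2 ⥤q Q'}
    {C : Type w} [Category.{w'} C] {D1 : Paths Q1 ⥤ C} {D2 : Paths Q2 ⥤ C}

theorem PG.mem2 (hconf : IsPushoutConfig m1 m2 m1' m2') (x : Q')
    (h : ¬ ∃ a, m1'.obj a = x) : ∃ b, m2'.obj b = x := by
  have hx : x ∈ Set.range m1'.obj ∪ Set.range m2'.obj := by
    rw [hconf.vertexCover]; trivial
  exact hx.resolve_left h

theorem PG.amem2 (hconf : IsPushoutConfig m1 m2 m1' m2') (t : Σ a b : Q', a ⟶ b)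
    (h : t ∉ arrowImage m1') : t ∈ arrowImage m2' := by
  have hx : t ∈ arrowImage m1' ∪ arrowImage m2' := by
    rw [hconf.arrowCover]; trivial
  exact hx.resolve_left h

theorem PG.objCompat (hconf : IsPushoutConfig m1 m2 m1' m2')
    (h1' : IsQuiverEmbedding m1') (h2' : IsQuiverEmbedding m2')
    (hD : pathsFunctor m1 ⋙ D1 = pathsFunctor m2 ⋙ D2)
    {a : Q1} {b : Q2} (hab : m1'.obj a = m2'.obj b) : D1.obj a = D2.obj b := by
  have hx : m1'.obj a ∈ Set.range (m1 ⋙q m1').obj := by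
    rw [hconf.vertexInter]
    exact ⟨⟨a, rfl⟩, ⟨b, hab.symm⟩⟩
  obtain ⟨q, hq⟩ := hx
  have hq1 : m1'.obj (m1.obj q) = m1'.obj a := hq
  have ha : m1.obj q = a := h1'.1 hq1
  have hq2' : m2'.obj (m2.obj q) = m2'.obj b := by
    have hc : (m1 ⋙q m1').obj q = (m2 ⋙q m2').obj q := by rw [hconf.comm]
    calc m2'.obj (m2.obj q) = m1'.obj (m1.obj q) := hc.symm
    _ = m2'.obj b := hq1.trans hab
  have hb : m2.obj q = b := h2'.1 hq2'
  have := Functor.congr_obj hD q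
  rw [← ha, ← hb]
  exact this

theorem PG.mapCompat (hconf : IsPushoutConfig m1 m2 m1' m2')
    (h1' : IsQuiverEmbedding m1') (h2' : IsQuiverEmbedding m2')
    (hD : pathsFunctor m1 ⋙ D1 = pathsFunctor m2 ⋙ D2)
    (p : Σ a b : Q1, a ⟶ b) (p' : Σ a b : Q2, a ⟶ b)
    (hst : (⟨m1'.obj p.1, m1'.obj p.2.1, m1'.map p.2.2⟩ : Σ a b : Q', a ⟶ b) =
      ⟨m2'.obj p'.1, m2'.obj p'.2.1, m2'.map p'.2.2⟩) :
    D1.map p.2.2.toPath =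
      eqToHom (PG.objCompat hconf h1' h2' hD (congrArg Sigma.fst hst)) ≫
        D2.map p'.2.2.toPath ≫
          eqToHom (PG.objCompat hconf h1' h2' hD
            (congrArg (fun t : Σ a b : Q', a ⟶ b => t.2.1) hst)).symm := by
  have hmem : (⟨m1'.obj p.1, m1'.obj p.2.1, m1'.map p.2.2⟩ : Σ a b : Q', a ⟶ b) ∈
      arrowImage (m1 ⋙q m1') := by
    rw [hconf.arrowInter]
    exact ⟨⟨p, rfl⟩, ⟨p', hst.symm⟩⟩
  obtain ⟨r, hr⟩ := hmem
  have hr1 : (fun q : Σ a b : Q1, a ⟶ b =>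
      (⟨m1'.obj q.1, m1'.obj q.2.1, m1'.map q.2.2⟩ : Σ a b : Q', a ⟶ b))
      ⟨m1.obj r.1, m1.obj r.2.1, m1.map r.2.2⟩ =
      (fun q : Σ a b : Q1, a ⟶ b =>
      (⟨m1'.obj q.1, m1'.obj q.2.1, m1'.map q.2.2⟩ : Σ a b : Q', a ⟶ b)) p := hr
  have hp : (⟨m1.obj r.1, m1.obj r.2.1, m1.map r.2.2⟩ : Σ a b : Q1, a ⟶ b) = p := h1'.2 hr1
  have hcomm : (⟨m2'.obj (m2.obj r.1), m2'.obj (m2.obj r.2.1),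
      m2'.map (m2.map r.2.2)⟩ : Σ a b : Q', a ⟶ b) =
      ⟨m1'.obj (m1.obj r.1), m1'.obj (m1.obj r.2.1), m1'.map (m1.map r.2.2)⟩ := by
    have := congrArg (fun F : Q ⥤q Q' =>
      (⟨F.obj r.1, F.obj r.2.1, F.map r.2.2⟩ : Σ a b : Q', a ⟶ b)) hconf.comm
    exact this.symm
  have hr2 : (fun q : Σ a b : Q2, a ⟶ b =>
      (⟨m2'.obj q.1, m2'.obj q.2.1, m2'.map q.2.2⟩ : Σ a b : Q', a ⟶ b))
      ⟨m2.obj r.1, m2.obj r.2.1, m2.map r.2.2⟩ =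
      (fun q : Σ a b : Q2, a ⟶ b =>
      (⟨m2'.obj q.1, m2'.obj q.2.1, m2'.map q.2.2⟩ : Σ a b : Q', a ⟶ b)) p' :=
    hcomm.trans (hr.trans hst)
  have hp' : (⟨m2.obj r.1, m2.obj r.2.1, m2.map r.2.2⟩ : Σ a b : Q2, a ⟶ b) = p' := h2'.2 hr2
  obtain ⟨a, b, f⟩ := p
  obtain ⟨a', b', f'⟩ := p'
  injection hp with ha hp2
  subst ha
  injection hp2 with hb hf
  subst hb
  obtain rfl := eq_of_heq hf
  injection hp' with ha' hp2'
  subst ha'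
  injection hp2' with hb' hf'
  subst hb'
  obtain rfl := eq_of_heq hf'
  have := Functor.congr_hom hD (r.2.2.toPath)
  simp only [Functor.comp_obj, Functor.comp_map, pathsFunctor, Paths.lift_toPath] at this
  exact this

open Classical in
noncomputable def PG.Fobj (hconf : IsPushoutConfig m1 m2 m1' m2')
    (D1 : Paths Q1 ⥤ C) (D2 : Paths Q2 ⥤ C) (x : Q') : C :=
  if h : ∃ a, m1'.obj a = x then D1.obj h.choose
  else D2.obj (PG.mem2 hconf x h).choose

theorem PG.Fobj1 (hconf : IsPushoutConfig m1 m2 m1' m2')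
    (h1' : IsQuiverEmbedding m1') (a : Q1) :
    PG.Fobj hconf D1 D2 (m1'.obj a) = D1.obj a := by
  have h : ∃ a', m1'.obj a' = m1'.obj a := ⟨a, rfl⟩
  unfold PG.Fobj
  rw [dif_pos h]
  exact congrArg D1.obj (h1'.1 h.choose_spec)

theorem PG.Fobj2 (hconf : IsPushoutConfig m1 m2 m1' m2')
    (h1' : IsQuiverEmbedding m1') (h2' : IsQuiverEmbedding m2')
    (hD : pathsFunctor m1 ⋙ D1 = pathsFunctor m2 ⋙ D2) (b : Q2) :
    PG.Fobj hconf D1 D2 (m2'.obj b) = D2.obj b := by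
  unfold PG.Fobj
  by_cases h : ∃ a, m1'.obj a = m2'.obj b
  · rw [dif_pos h]
    exact PG.objCompat hconf h1' h2' hD h.choose_spec
  · rw [dif_neg h]
    exact congrArg D2.obj (h2'.1 (PG.mem2 hconf _ h).choose_spec)

theorem PG.srcEq1 (hconf : IsPushoutConfig m1 m2 m1' m2') (h1' : IsQuiverEmbedding m1')
    {x y : Q'} {e : x ⟶ y} (h : (⟨x, y, e⟩ : Σ a b : Q', a ⟶ b) ∈ arrowImage m1') :
    PG.Fobj hconf D1 D2 x = D1.obj h.choose.1 := by
  have hx : m1'.obj h.choose.1 = x := congrArg Sigma.fst h.choose_spec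
  exact (congrArg (PG.Fobj hconf D1 D2) hx).symm.trans (PG.Fobj1 hconf h1' _)

theorem PG.tgtEq1 (hconf : IsPushoutConfig m1 m2 m1' m2') (h1' : IsQuiverEmbedding m1')
    {x y : Q'} {e : x ⟶ y} (h : (⟨x, y, e⟩ : Σ a b : Q', a ⟶ b) ∈ arrowImage m1') :
    D1.obj h.choose.2.1 = PG.Fobj hconf D1 D2 y := by
  have hy : m1'.obj h.choose.2.1 = y :=
    congrArg (fun t : Σ a b : Q', a ⟶ b => t.2.1) h.choose_spec
  exact (PG.Fobj1 hconf h1' _).symm.trans (congrArg (PG.Fobj hconf D1 D2) hy)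

theorem PG.srcEq2 (hconf : IsPushoutConfig m1 m2 m1' m2')
    (h1' : IsQuiverEmbedding m1') (h2' : IsQuiverEmbedding m2')
    (hD : pathsFunctor m1 ⋙ D1 = pathsFunctor m2 ⋙ D2)
    {x y : Q'} {e : x ⟶ y} (h : (⟨x, y, e⟩ : Σ a b : Q', a ⟶ b) ∈ arrowImage m2') :
    PG.Fobj hconf D1 D2 x = D2.obj h.choose.1 := by
  have hx : m2'.obj h.choose.1 = x := congrArg Sigma.fst h.choose_spec
  exact (congrArg (PG.Fobj hconf D1 D2) hx).symm.trans (PG.Fobj2 hconf h1' h2' hD _)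

theorem PG.tgtEq2 (hconf : IsPushoutConfig m1 m2 m1' m2')
    (h1' : IsQuiverEmbedding m1') (h2' : IsQuiverEmbedding m2')
    (hD : pathsFunctor m1 ⋙ D1 = pathsFunctor m2 ⋙ D2)
    {x y : Q'} {e : x ⟶ y} (h : (⟨x, y, e⟩ : Σ a b : Q', a ⟶ b) ∈ arrowImage m2') :
    D2.obj h.choose.2.1 = PG.Fobj hconf D1 D2 y := by
  have hy : m2'.obj h.choose.2.1 = y :=
    congrArg (fun t : Σ a b : Q', a ⟶ b => t.2.1) h.choose_spec
  exact (PG.Fobj2 hconf h1' h2' hD _).symm.trans (congrArg (PG.Fobj hconf D1 D2) hy)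

open Classical in
noncomputable def PG.Fmap (hconf : IsPushoutConfig m1 m2 m1' m2')
    (h1' : IsQuiverEmbedding m1') (h2' : IsQuiverEmbedding m2')
    (hD : pathsFunctor m1 ⋙ D1 = pathsFunctor m2 ⋙ D2)
    {x y : Q'} (e : x ⟶ y) :
    PG.Fobj hconf D1 D2 x ⟶ PG.Fobj hconf D1 D2 y :=
  if h : (⟨x, y, e⟩ : Σ a b : Q', a ⟶ b) ∈ arrowImage m1' then
    eqToHom (PG.srcEq1 hconf h1' h) ≫ D1.map h.choose.2.2.toPath ≫
      eqToHom (PG.tgtEq1 hconf h1' h)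
  else
    eqToHom (PG.srcEq2 hconf h1' h2' hD (PG.amem2 hconf _ h)) ≫
      D2.map (PG.amem2 hconf _ h).choose.2.2.toPath ≫
        eqToHom (PG.tgtEq2 hconf h1' h2' hD (PG.amem2 hconf _ h))

theorem PG.mapCongr (D : Paths Q1 ⥤ C) {p q : Σ a b : Q1, a ⟶ b} (h : p = q) :
    D.map p.2.2.toPath =
      eqToHom (congrArg (fun t : Σ a b : Q1, a ⟶ b => D.obj t.1) h) ≫
        D.map q.2.2.toPath ≫
          eqToHom (congrArg (fun t : Σ a b : Q1, a ⟶ b => D.obj t.2.1) h).symm := by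
  subst h; simp

theorem PG.mapCongr2 (D : Paths Q2 ⥤ C) {p q : Σ a b : Q2, a ⟶ b} (h : p = q) :
    D.map p.2.2.toPath =
      eqToHom (congrArg (fun t : Σ a b : Q2, a ⟶ b => D.obj t.1) h) ≫
        D.map q.2.2.toPath ≫
          eqToHom (congrArg (fun t : Σ a b : Q2, a ⟶ b => D.obj t.2.1) h).symm := by
  subst h; simp

theorem PG.Fmap1 (hconf : IsPushoutConfig m1 m2 m1' m2')
    (h1' : IsQuiverEmbedding m1') (h2' : IsQuiverEmbedding m2')
    (hD : pathsFunctor m1 ⋙ D1 = pathsFunctor m2 ⋙ D2)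
    {a b : Q1} (e : a ⟶ b) :
    PG.Fmap hconf h1' h2' hD (m1'.map e) =
      eqToHom (PG.Fobj1 hconf h1' a) ≫ D1.map e.toPath ≫
        eqToHom (PG.Fobj1 hconf h1' b).symm := by
  have hmem : (⟨m1'.obj a, m1'.obj b, m1'.map e⟩ : Σ a b : Q', a ⟶ b) ∈ arrowImage m1' :=
    ⟨⟨a, b, e⟩, rfl⟩
  unfold PG.Fmap
  rw [dif_pos hmem]
  have hc : hmem.choose = (⟨a, b, e⟩ : Σ a b : Q1, a ⟶ b) := h1'.2 hmem.choose_spec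
  rw [PG.mapCongr D1 hc]
  simp

theorem PG.Fmap2 (hconf : IsPushoutConfig m1 m2 m1' m2')
    (h1' : IsQuiverEmbedding m1') (h2' : IsQuiverEmbedding m2')
    (hD : pathsFunctor m1 ⋙ D1 = pathsFunctor m2 ⋙ D2)
    {a b : Q2} (e : a ⟶ b) :
    PG.Fmap hconf h1' h2' hD (m2'.map e) =
      eqToHom (PG.Fobj2 hconf h1' h2' hD a) ≫ D2.map e.toPath ≫
        eqToHom (PG.Fobj2 hconf h1' h2' hD b).symm := by
  unfold PG.Fmap
  by_cases h : (⟨m2'.obj a, m2'.obj b, m2'.map e⟩ : Σ a b : Q', a ⟶ b) ∈ arrowImage m1'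
  · rw [dif_pos h]
    have hst : (⟨m1'.obj h.choose.1, m1'.obj h.choose.2.1, m1'.map h.choose.2.2⟩ :
        Σ a b : Q', a ⟶ b) =
        ⟨m2'.obj (⟨a, b, e⟩ : Σ a b : Q2, a ⟶ b).1,
          m2'.obj (⟨a, b, e⟩ : Σ a b : Q2, a ⟶ b).2.1,
          m2'.map (⟨a, b, e⟩ : Σ a b : Q2, a ⟶ b).2.2⟩ := h.choose_spec
    rw [PG.mapCompat hconf h1' h2' hD h.choose ⟨a, b, e⟩ hst]
    simp
  · rw [dif_neg h]
    have hc : (PG.amem2 hconf _ h).choose = (⟨a, b, e⟩ : Σ a b : Q2, a ⟶ b) :=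
      h2'.2 (PG.amem2 hconf _ h).choose_spec
    rw [PG.mapCongr2 D2 hc]
    simp

noncomputable def PG.F (hconf : IsPushoutConfig m1 m2 m1' m2')
    (h1' : IsQuiverEmbedding m1') (h2' : IsQuiverEmbedding m2')
    (hD : pathsFunctor m1 ⋙ D1 = pathsFunctor m2 ⋙ D2) : Q' ⥤q C where
  obj := PG.Fobj hconf D1 D2
  map := PG.Fmap hconf h1' h2' hD

theorem PG.restr1 (hconf : IsPushoutConfig m1 m2 m1' m2')
    (h1' : IsQuiverEmbedding m1') (h2' : IsQuiverEmbedding m2')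
    (hD : pathsFunctor m1 ⋙ D1 = pathsFunctor m2 ⋙ D2) :
    pathsFunctor m1' ⋙ Paths.lift (PG.F hconf h1' h2' hD) = D1 := by
  fapply Paths.ext_functor
  · funext a
    exact PG.Fobj1 hconf h1' a
  · intro a b e
    show (Paths.lift (PG.F hconf h1' h2' hD)).map ((pathsFunctor m1').map e.toPath) = _
    simp only [pathsFunctor, Paths.lift_toPath, Prefunctor.comp_map, Paths.of_map]
    exact (Paths.lift_toPath _ _).trans (PG.Fmap1 hconf h1' h2' hD e)

theorem PG.restr2 (hconf : IsPushoutConfig m1 m2 m1' m2')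
    (h1' : IsQuiverEmbedding m1') (h2' : IsQuiverEmbedding m2')
    (hD : pathsFunctor m1 ⋙ D1 = pathsFunctor m2 ⋙ D2) :
    pathsFunctor m2' ⋙ Paths.lift (PG.F hconf h1' h2' hD) = D2 := by
  fapply Paths.ext_functor
  · funext b
    exact PG.Fobj2 hconf h1' h2' hD b
  · intro a b e
    show (Paths.lift (PG.F hconf h1' h2' hD)).map ((pathsFunctor m2').map e.toPath) = _
    simp only [pathsFunctor, Paths.lift_toPath, Prefunctor.comp_map, Paths.of_map]
    exact (Paths.lift_toPath _ _).trans (PG.Fmap2 hconf h1' h2' hD e)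

theorem PG.eqAux {X Y X' Y' Z W : C} {g : X ⟶ Y} {h : X' ⟶ Y'} {k : Z ⟶ W}
    {a : X = Z} {b : W = Y} {c : X' = Z} {d : W = Y'}
    (hg : g = eqToHom a ≫ k ≫ eqToHom b) (hh : h = eqToHom c ≫ k ≫ eqToHom d)
    (e1 : X = X') (e2 : Y' = Y) : g = eqToHom e1 ≫ h ≫ eqToHom e2 := by
  subst hg hh; simp

theorem PG.uniq (hconf : IsPushoutConfig m1 m2 m1' m2')
    (G H : Paths Q' ⥤ C)
    (hG1 : pathsFunctor m1' ⋙ G = D1) (hG2 : pathsFunctor m2' ⋙ G = D2)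
    (hH1 : pathsFunctor m1' ⋙ H = D1) (hH2 : pathsFunctor m2' ⋙ H = D2) : G = H := by
  fapply Paths.ext_functor
  · funext x
    have hx : x ∈ Set.range m1'.obj ∪ Set.range m2'.obj := by
      rw [hconf.vertexCover]; trivial
    rcases hx with ⟨a, rfl⟩ | ⟨b, rfl⟩
    · exact (Functor.congr_obj hG1 a).trans (Functor.congr_obj hH1 a).symm
    · exact (Functor.congr_obj hG2 b).trans (Functor.congr_obj hH2 b).symm
  · intro x y e
    have hx : (⟨x, y, e⟩ : Σ a b : Q', a ⟶ b) ∈ arrowImage m1' ∪ arrowImage m2' := by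
      rw [hconf.arrowCover]; trivial
    rcases hx with ⟨⟨a, b, f⟩, hp⟩ | ⟨⟨a, b, f⟩, hp⟩
    · dsimp only at hp
      injection hp with h1x hp2
      subst h1x
      injection hp2 with h1y hf
      subst h1y
      obtain rfl := eq_of_heq hf
      have hg := Functor.congr_hom hG1 f.toPath
      have hh := Functor.congr_hom hH1 f.toPath
      simp only [Functor.comp_map, Functor.comp_obj, pathsFunctor, Paths.lift_toPath,
        Prefunctor.comp_map, Paths.of_map] at hg hh
      have hg' : G.map (m1'.map f).toPath = _ :=
        (congrArg G.map (Paths.lift_toPath _ f)).symm.trans ((Functor.comp_map _ _ _).symm.trans hg)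
      have hh' : H.map (m1'.map f).toPath = _ :=
        (congrArg H.map (Paths.lift_toPath _ f)).symm.trans ((Functor.comp_map _ _ _).symm.trans hh)
      exact PG.eqAux hg' hh' _ _
    · dsimp only at hp
      injection hp with h1x hp2
      subst h1x
      injection hp2 with h1y hf
      subst h1y
      obtain rfl := eq_of_heq hf
      have hg := Functor.congr_hom hG2 f.toPath
      have hh := Functor.congr_hom hH2 f.toPath
      simp only [Functor.comp_map, Functor.comp_obj, pathsFunctor, Paths.lift_toPath,
        Prefunctor.comp_map, Paths.of_map] at hg hh
      have hg' : G.map (m2'.map f).toPath = _ :=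
        (congrArg G.map (Paths.lift_toPath _ f)).symm.trans ((Functor.comp_map _ _ _).symm.trans hg)
      have hh' : H.map (m2'.map f).toPath = _ :=
        (congrArg H.map (Paths.lift_toPath _ f)).symm.trans ((Functor.comp_map _ _ _).symm.trans hh)
      exact PG.eqAux hg' hh' _ _

end Aux

/-- given a pushout configuration of quiver embeddings and two diagrams whose
pullbacks to the common subquiver agree, there is a unique diagram on the pushout restricting
to the given diagrams. -/
theorem pushout_config_diagram_glueing {Q : Type u} {Q1 : Type u1} {Q2 : Type u2} {Q' : Type u3}
    [Quiver.{v + 1} Q] [Quiver.{v1 + 1} Q1] [Quiver.{v2 + 1} Q2] [Quiver.{v3 + 1} Q']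
    (m1 : Q ⥤q Q1) (m2 : Q ⥤q Q2) (m1' : Q1 ⥤q Q') (m2' : Q2 ⥤q Q')
    (hconf : IsPushoutConfig m1 m2 m1' m2')
    (h1 : IsQuiverEmbedding m1) (h2 : IsQuiverEmbedding m2)
    (h1' : IsQuiverEmbedding m1') (h2' : IsQuiverEmbedding m2')
    (C : Type w) [Category.{w'} C] (D1 : Paths Q1 ⥤ C) (D2 : Paths Q2 ⥤ C)
    (hD : pathsFunctor m1 ⋙ D1 = pathsFunctor m2 ⋙ D2) :
    ∃! D' : Paths Q' ⥤ C, pathsFunctor m1' ⋙ D' = D1 ∧ pathsFunctor m2' ⋙ D' = D2 := by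
  refine ⟨Paths.lift (PG.F hconf h1' h2' hD),
    ⟨PG.restr1 hconf h1' h2' hD, PG.restr2 hconf h1' h2' hD⟩, ?_⟩
  rintro G ⟨hG1, hG2⟩
  exact PG.uniq hconf G _ hG1 hG2 (PG.restr1 hconf h1' h2' hD) (PG.restr2 hconf h1' h2' hD)
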